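/- arXiv:1907.02831 — 2 statements merged into one kernel-verified Lean document; each statement's English description precedes it below -/
import Mathlib

section
/- Let X, Y be full-rank n×m real matrices with XᵀY invertible, and let Ũ Σ̃ Ṽᵀ be a singular value decomposition of Y(XᵀY)⁻¹ − X. Then the curve γ(s) = span of the columns of X Ṽ cos(s·arctan(Σ̃)) + Ũ sin(s·arctan(Σ̃)) satisfies γ(0) = span(X) and γ(1) = span(Y). -/
open Matrix

lemma range_mul_unit {n m : ℕ} (A : Matrix (Fin n) (Fin m) ℝ)
    (B : Matrix (Fin m) (Fin m) ℝ) (hB : IsUnit B) :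
    LinearMap.range (A * B).mulVecLin = LinearMap.range A.mulVecLin := by
  rw [Matrix.mulVecLin_mul, LinearMap.range_comp_of_range_eq_top]
  rw [LinearMap.range_eq_top]
  intro v
  refine ⟨B⁻¹.mulVec v, ?_⟩
  have hd : IsUnit B.det := (Matrix.isUnit_iff_isUnit_det B).mp hB
  simp [Matrix.mulVecLin_apply, Matrix.mulVec_mulVec, Matrix.mul_nonsing_inv B hd]

/-- The Grassmannian geodesic
`γ(s) = span(X Ṽ cos(s arctan Σ̃) + Ũ sin(s arctan Σ̃))`, where
`Ũ Σ̃ Ṽᵀ` is an SVD of `Y (XᵀY)⁻¹ - X`, joins `span X` (at `s = 0`)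
to `span Y` (at `s = 1`). -/
theorem stmt_11 (n m : ℕ) (X Y : Matrix (Fin n) (Fin m) ℝ)
    (hX : Xᵀ * X = 1) (hY : Y.rank = m) (hXY : IsUnit (Xᵀ * Y))
    (U : Matrix (Fin n) (Fin m) ℝ) (σ : Fin m → ℝ)
    (V : Matrix (Fin m) (Fin m) ℝ)
    (hU : Uᵀ * U = 1) (hV₁ : Vᵀ * V = 1) (hV₂ : V * Vᵀ = 1)
    (hσ : ∀ i, 0 ≤ σ i)
    (hsvd : Y * (Xᵀ * Y)⁻¹ - X = U * Matrix.diagonal σ * Vᵀ) :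
    LinearMap.range
        (X * V * Matrix.diagonal (fun i => Real.cos ((0 : ℝ) * Real.arctan (σ i))) +
          U * Matrix.diagonal (fun i => Real.sin ((0 : ℝ) * Real.arctan (σ i)))).mulVecLin =
      LinearMap.range X.mulVecLin ∧
    LinearMap.range
        (X * V * Matrix.diagonal (fun i => Real.cos ((1 : ℝ) * Real.arctan (σ i))) +
          U * Matrix.diagonal (fun i => Real.sin ((1 : ℝ) * Real.arctan (σ i)))).mulVecLin =
      LinearMap.range Y.mulVecLin := by
  have hVu : IsUnit V := ⟨⟨V, Vᵀ, hV₂, hV₁⟩, rfl⟩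
  constructor
  · simp only [zero_mul, Real.cos_zero, Real.sin_zero, Matrix.diagonal_one,
      Matrix.diagonal_zero, Matrix.mul_one, Matrix.mul_zero, add_zero]
    exact range_mul_unit X V hVu
  · set c : Fin m → ℝ := fun i => Real.cos (Real.arctan (σ i)) with hc
    have hcpos : ∀ i, 0 < c i := fun i => Real.cos_arctan_pos (σ i)
    have hsin : ∀ i, Real.sin (Real.arctan (σ i)) = σ i * c i := by
      intro i
      have ht := Real.tan_arctan (σ i)
      rw [Real.tan_eq_sin_div_cos] at ht
      field_simp [(hcpos i).ne'] at ht ⊢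
      linarith [ht]
    have hcu : IsUnit (Matrix.diagonal c) := by
      rw [Matrix.isUnit_iff_isUnit_det, Matrix.det_diagonal]
      exact isUnit_iff_ne_zero.mpr (Finset.prod_ne_zero_iff.mpr fun i _ => (hcpos i).ne')
    have hXYinv : IsUnit (Xᵀ * Y)⁻¹ := by
      rw [Matrix.isUnit_nonsing_inv_iff]
      exact hXY
    have hYX : Y * (Xᵀ * Y)⁻¹ = X + U * Matrix.diagonal σ * Vᵀ := by
      rw [← hsvd]; abel
    have hdc : Matrix.diagonal (fun i => σ i * c i) =
        Matrix.diagonal σ * Matrix.diagonal c := by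
      rw [Matrix.diagonal_mul_diagonal]
    have key : X * V * Matrix.diagonal (fun i => Real.cos ((1 : ℝ) * Real.arctan (σ i))) +
          U * Matrix.diagonal (fun i => Real.sin ((1 : ℝ) * Real.arctan (σ i))) =
        Y * ((Xᵀ * Y)⁻¹ * (V * Matrix.diagonal c)) := by
      simp only [one_mul, hsin]
      rw [← hc, hdc]
      rw [← Matrix.mul_assoc Y, hYX, Matrix.add_mul]
      congr 1
      · rw [Matrix.mul_assoc]
      · rw [Matrix.mul_assoc (U * Matrix.diagonal σ) Vᵀ,
          ← Matrix.mul_assoc Vᵀ V, hV₁, Matrix.one_mul, ← Matrix.mul_assoc]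
    rw [key]
    exact range_mul_unit Y _ (hXYinv.mul (hVu.mul hcu))
end

section
/- For any two m-dimensional subspaces of ℝ^n represented by orthonormal matrices X and Y with XᵀY invertible, the matrix Z = X Ṽ cos(arctan Σ̃) + Ũ sin(arctan Σ̃), where Ũ Σ̃ Ṽᵀ is an SVD of Y(XᵀY)⁻¹ − X with XᵀŨ = 0, has orthonormal columns. -/
open Matrix

/-- The matrix `Z = X Ṽ cos(arctan Σ̃) + Ũ sin(arctan Σ̃)`, built from an SVD
`Ũ Σ̃ Ṽᵀ` of `Y (XᵀY)⁻¹ - X` with `Xᵀ Ũ = 0`, has orthonormal columns. -/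
theorem stmt_16 (n m : ℕ) (X Y : Matrix (Fin n) (Fin m) ℝ)
    (hX : Xᵀ * X = 1) (hY : Yᵀ * Y = 1) (hXY : IsUnit (Xᵀ * Y))
    (U : Matrix (Fin n) (Fin m) ℝ) (σ : Fin m → ℝ)
    (V : Matrix (Fin m) (Fin m) ℝ)
    (hU : Uᵀ * U = 1) (hXU : Xᵀ * U = 0)
    (hV₁ : Vᵀ * V = 1) (hV₂ : V * Vᵀ = 1) (hσ : ∀ i, 0 ≤ σ i)
    (hsvd : Y * (Xᵀ * Y)⁻¹ - X = U * Matrix.diagonal σ * Vᵀ) :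
    (X * V * Matrix.diagonal (fun i => Real.cos (Real.arctan (σ i))) +
        U * Matrix.diagonal (fun i => Real.sin (Real.arctan (σ i))))ᵀ *
      (X * V * Matrix.diagonal (fun i => Real.cos (Real.arctan (σ i))) +
        U * Matrix.diagonal (fun i => Real.sin (Real.arctan (σ i)))) = 1 := by
  have hUX : Uᵀ * X = 0 := by
    have := congrArg Matrix.transpose hXU
    simpa using this
  set C := Matrix.diagonal (fun i => Real.cos (Real.arctan (σ i))) with hC
  set S := Matrix.diagonal (fun i => Real.sin (Real.arctan (σ i))) with hS
  have hCt : Cᵀ = C := Matrix.diagonal_transpose _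
  have hSt : Sᵀ = S := Matrix.diagonal_transpose _
  have expand : (X * V * C + U * S)ᵀ * (X * V * C + U * S)
      = C * (Vᵀ * (Xᵀ * X) * V) * C + C * Vᵀ * (Xᵀ * U) * S
        + S * (Uᵀ * X) * V * C + S * (Uᵀ * U) * S := by
    simp only [Matrix.transpose_add, Matrix.transpose_mul, hCt, hSt,
      Matrix.add_mul, Matrix.mul_add, Matrix.mul_assoc]
    abel
  rw [expand, hX, hXU, hUX, hU]
  simp only [Matrix.mul_zero, Matrix.zero_mul, Matrix.mul_one, add_zero,
    zero_add, mul_one, hV₁]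
  rw [hC, hS, Matrix.diagonal_mul_diagonal, Matrix.diagonal_mul_diagonal,
    Matrix.diagonal_add]
  have hfun : (fun i => Real.cos (Real.arctan (σ i)) * Real.cos (Real.arctan (σ i)) +
      Real.sin (Real.arctan (σ i)) * Real.sin (Real.arctan (σ i))) = fun _ => (1:ℝ) := by
    funext i
    rw [← Real.sin_sq_add_cos_sq (Real.arctan (σ i))]
    ring
  rw [hfun, Matrix.diagonal_one]
end
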